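/- arXiv:math/0501130 — 5 statements merged into one kernel-verified Lean document; each statement's English description precedes it below -/
import Mathlib

section
/- For every natural number n ≥ 1, the Eulerian elements ẽ⁽¹⁾ₙ, …, ẽ⁽ⁿ⁾ₙ in the rational group algebra ℚ[Sₙ] are mutually orthogonal idempotents summing to the identity: ẽ⁽ˡ⁾ₙ · ẽ⁽ˡ'⁾ₙ = ẽ⁽ˡ⁾ₙ if l = l' and 0 otherwise (for all 1 ≤ l, l' ≤ n), and Σ_{l=1}^{n} ẽ⁽ˡ⁾ₙ = 1. -/
/-!
Let `ψₖ = ∑_{w : Fin n → Fin k} sort w ∈ ℚ[Sₙ]`, where `sort w` is the stable sorting permutation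
of the word `w`. Stably sorting by a pair of keys amounts to sorting by the minor key and then by
the major one, so `ψₐ ψ_b = ψ_{ab}`. The words sorted by a given `τ` are the `w` with `w ∘ τ`
weakly increasing and strictly increasing at the descents of `τ`; after a shift these are the
strictly increasing maps `Fin n → Fin (k + n - 1 - des τ)`, hence
`ψₖ = ∑_τ C(k + n - 1 - des τ, n) τ = ∑ₗ kˡ ẽ⁽ˡ⁾ₙ`. Comparing coefficients in
`∑_{l,l'} aˡ bˡ' ẽ⁽ˡ⁾ₙ ẽ⁽ˡ'⁾ₙ = ∑ₗ (ab)ˡ ẽ⁽ˡ⁾ₙ` gives the orthogonality relations, and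
`ψ₁ = 1`, `ψ₀ = 0` give `∑ₗ ẽ⁽ˡ⁾ₙ = 1`.
-/

noncomputable section

/-- Number of descents of a permutation of `Fin n`: the number of positions `i`
(`1 ≤ i ≤ n-1`) with `σ(i) > σ(i+1)`, encoded as pairs `(p₁, p₂)` with `p₂ = p₁ + 1`. -/
def descents {n : ℕ} (σ : Equiv.Perm (Fin n)) : ℕ :=
  (Finset.univ.filter fun p : Fin n × Fin n =>
    (p.2 : ℕ) = (p.1 : ℕ) + 1 ∧ σ p.2 < σ p.1).card

/-- `aCoeff n l j` is the coefficient of `X^l` in `(1/n!) ∏_{i=1}^n (X - j + i) ∈ ℚ[X]`. -/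
def aCoeff (n l j : ℕ) : ℚ :=
  (((n.factorial : ℚ))⁻¹ • ∏ i ∈ Finset.Icc 1 n,
    (Polynomial.X + Polynomial.C ((i : ℚ) - (j : ℚ)))).coeff l

/-- The Eulerian element `ẽ⁽ˡ⁾ₙ = Σ_{σ ∈ Sₙ} aₙ^{l, des σ + 1} · σ ∈ ℚ[Sₙ]`. -/
def eul (n l : ℕ) : MonoidAlgebra ℚ (Equiv.Perm (Fin n)) :=
  ∑ σ : Equiv.Perm (Fin n), MonoidAlgebra.single σ (aCoeff n l (descents σ + 1))


open Finset Polynomial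

namespace Tuple

variable {n : ℕ} {α β : Type*} [LinearOrder α] [LinearOrder β]

theorem sort_eq_iff_strictMono_lex {f : Fin n → α} {σ : Equiv.Perm (Fin n)} :
    sort f = σ ↔ StrictMono fun i => toLex (f (σ i), σ i) := by
  rw [eq_comm, eq_sort_iff']; rfl

theorem sort_comp_of_strictMono {g : α → β} (hg : StrictMono g) (f : Fin n → α) :
    sort (g ∘ f) = sort f := by
  rw [sort_eq_iff_strictMono_lex]
  intro i j hij
  have := (sort_eq_iff_strictMono_lex (f := f)).1 rfl hij
  simpa only [Prod.Lex.toLex_lt_toLex, Function.comp_apply, hg.lt_iff_lt, hg.injective.eq_iff]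
    using this

theorem sort_lex (u : Fin n → β) (v : Fin n → α) :
    sort (fun i => toLex (u i, v i)) = sort v * sort (u ∘ sort v) := by
  rw [sort_eq_iff_strictMono_lex]
  intro i j hij
  have hu := (sort_eq_iff_strictMono_lex (f := u ∘ sort v)).1 rfl hij
  simp only [Prod.Lex.toLex_lt_toLex, Function.comp_apply, Equiv.Perm.coe_mul] at hu ⊢
  rcases hu with hu | ⟨hu, hρ⟩
  · exact Or.inl (Or.inl hu)
  · have hv := (sort_eq_iff_strictMono_lex (f := v)).1 rfl hρ
    simp only [Prod.Lex.toLex_lt_toLex] at hv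
    rcases hv with hv | ⟨hv, hσ⟩
    · exact Or.inl (Or.inr ⟨hu, hv⟩)
    · exact Or.inr ⟨Prod.ext hu hv, hσ⟩

end Tuple

section SortSum

variable (R : Type*) [Semiring R] (n : ℕ) (α : Type*) [Fintype α] [LinearOrder α]

def sortSum : MonoidAlgebra R (Equiv.Perm (Fin n)) :=
  ∑ w : Fin n → α, MonoidAlgebra.single (Tuple.sort w) 1

variable {α} {β : Type*} [Fintype β] [LinearOrder β]

theorem sortSum_congr (e : α ≃o β) : sortSum R n α = sortSum R n β :=
  Fintype.sum_equiv (Equiv.arrowCongr (Equiv.refl _) e.toEquiv) _ _ fun w => by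
    rw [← Tuple.sort_comp_of_strictMono e.strictMono w]; rfl

theorem sortSum_mul : sortSum R n α * sortSum R n β = sortSum R n (β ×ₗ α) := by
  have reindex (v : Fin n → α) :
      ∑ u : Fin n → β, MonoidAlgebra.single (Tuple.sort v * Tuple.sort u) (1 : R) =
        ∑ u : Fin n → β, MonoidAlgebra.single (Tuple.sort fun i => toLex (u i, v i)) 1 :=
    Fintype.sum_equiv (Equiv.arrowCongr (Tuple.sort v) (Equiv.refl _)) _ _ fun u => by
      rw [Tuple.sort_lex]; congr; ext; simp
  simp only [sortSum, sum_mul_sum, MonoidAlgebra.single_mul_single, mul_one, reindex]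
  rw [← Fintype.sum_prod_type']
  exact Fintype.sum_equiv ((Equiv.prodComm _ _).trans
    ((Equiv.arrowProdEquivProdArrow _ _ _).symm.trans (Equiv.arrowCongr (Equiv.refl _) toLex)))
    _ _ fun _ => rfl

theorem sortSum_of_unique [Unique α] : sortSum R n α = 1 := by
  rw [sortSum, Fintype.sum_unique,
    Tuple.sort_eq_refl_iff_monotone.2 fun _ _ _ => (Subsingleton.elim _ _).le]
  rfl

theorem sortSum_of_isEmpty [IsEmpty α] (hn : n ≠ 0) : sortSum R n α = 0 := by
  have : Nonempty (Fin n) := ⟨⟨0, Nat.pos_of_ne_zero hn⟩⟩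
  simp [sortSum]

theorem sortSum_eq_sum_card_fiber :
    sortSum R n α =
      ∑ τ, Fintype.card {w : Fin n → α // Tuple.sort w = τ} • MonoidAlgebra.single τ 1 :=
  (Fintype.sum_fiberwise' Tuple.sort fun τ => MonoidAlgebra.single τ (1 : R)).symm.trans (by simp)

end SortSum

section Staircase

variable {m : ℕ}

def staircases (δ : Fin m → ℤ) (U : ℤ) : Set (Fin (m + 1) → ℤ) :=
  {f | 0 ≤ f 0 ∧ f (Fin.last m) < U ∧ ∀ i, f i.castSucc + δ i ≤ f i.succ}

variable {δ : Fin m → ℤ} {U : ℤ} {f : Fin (m + 1) → ℤ}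

theorem monotone_of_mem_staircases (hδ : 0 ≤ δ) (hf : f ∈ staircases δ U) : Monotone f :=
  Fin.monotone_iff_le_succ.2 fun i => (le_add_of_nonneg_right (hδ i)).trans (hf.2.2 i)

theorem mem_Ico_of_mem_staircases (hδ : 0 ≤ δ) (hf : f ∈ staircases δ U) (i : Fin (m + 1)) :
    f i ∈ Set.Ico 0 U :=
  ⟨hf.1.trans (monotone_of_mem_staircases hδ hf (Fin.zero_le i)),
    (monotone_of_mem_staircases hδ hf (Fin.le_last i)).trans_lt hf.2.1⟩

theorem Fin.partialSum_last {M : Type*} [AddCommMonoid M] (g : Fin m → M) :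
    Fin.partialSum g (Fin.last m) = ∑ i, g i := by
  simp [Fin.partialSum, List.take_of_length_le, List.sum_ofFn]

theorem add_partialSum_mem_staircases_iff (ε : Fin m → ℤ) :
    f + Fin.partialSum ε ∈ staircases (δ + ε) (U + ∑ i, ε i) ↔ f ∈ staircases δ U := by
  simp only [staircases, Set.mem_ofPred_eq, Pi.add_apply, Fin.partialSum_zero, Fin.partialSum_succ,
    Fin.partialSum_last]
  refine and_congr (by rw [add_zero])
    (and_congr (add_lt_add_iff_right _) (forall_congr' fun i => ?_))
  constructor <;> intro h <;> linarith

def staircasesOneEquiv (U : ℤ) :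
    staircases (1 : Fin m → ℤ) U ≃ (Fin (m + 1) ↪o Set.Ico 0 U) where
  toFun f :=
    OrderEmbedding.ofStrictMono (fun i => ⟨f.1 i, mem_Ico_of_mem_staircases zero_le_one f.2 i⟩)
      (Fin.strictMono_iff_lt_succ.2 fun i => Int.add_one_le_iff.1 (f.2.2.2 i))
  invFun e := ⟨fun i => e i, (e 0).2.1, (e (Fin.last m)).2.2,
    fun _ => Int.add_one_le_iff.2 (e.strictMono Fin.castSucc_lt_succ)⟩
  left_inv _ := rfl
  right_inv _ := rfl

theorem card_staircases_one (U : ℤ) :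
    Nat.card (staircases (1 : Fin m → ℤ) U) = U.toNat.choose (m + 1) := by
  rw [Nat.card_congr ((staircasesOneEquiv U).trans Set.powersetCard.ofFinEmbEquiv),
    Set.powersetCard.card]
  simp

theorem card_staircases (δ : Fin m → ℤ) (U : ℤ) :
    Nat.card (staircases δ U) = (U + m - ∑ i, δ i).toNat.choose (m + 1) := by
  have hU : U + m - ∑ i, δ i = U + ∑ i, (1 - δ) i := by
    simp [sum_sub_distrib]; ring
  rw [hU, ← card_staircases_one]
  -- adding the partial sums of `1 - δ` turns minimal steps `δ` into minimal steps `1`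
  refine Nat.card_congr (Equiv.subtypeEquiv (Equiv.addRight (Fin.partialSum (1 - δ))) fun f => ?_)
  rw [← add_partialSum_mem_staircases_iff (1 - δ), add_sub_cancel]
  rfl

end Staircase

section Descents

variable {m : ℕ}

theorem descents_eq_card (τ : Equiv.Perm (Fin (m + 1))) :
    descents τ = #{i : Fin m | τ i.succ < τ i.castSucc} := by
  symm
  refine card_bij (fun i _ => (i.castSucc, i.succ)) ?_ ?_ ?_
  · intro i hi
    simpa using hi
  · intro i _ j _ h
    simpa using congrArg Prod.fst h
  · rintro ⟨p, q⟩ h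
    simp only [mem_filter, mem_univ, true_and] at h
    have hp : (p : ℕ) < m := by omega
    have hq : (⟨p, hp⟩ : Fin m).succ = q := Fin.ext (by simp [h.1])
    exact ⟨⟨p, hp⟩, by simpa [hq] using h.2, Prod.ext rfl hq⟩

theorem sort_eq_iff_forall_add_ite_le {k : ℕ} (w : Fin (m + 1) → Fin k)
    (τ : Equiv.Perm (Fin (m + 1))) :
    Tuple.sort w = τ ↔ ∀ i : Fin m,
      (w (τ i.castSucc) : ℤ) + (if τ i.succ < τ i.castSucc then 1 else 0) ≤ w (τ i.succ) := by
  rw [Tuple.sort_eq_iff_strictMono_lex, Fin.strictMono_iff_lt_succ]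
  refine forall_congr' fun i => ?_
  have hne : τ i.castSucc ≠ τ i.succ := τ.injective.ne Fin.castSucc_lt_succ.ne
  simp only [Prod.Lex.toLex_lt_toLex, Fin.lt_def, Fin.ext_iff] at hne ⊢
  split_ifs <;> omega

theorem descents_le (τ : Equiv.Perm (Fin (m + 1))) : descents τ ≤ m :=
  (descents_eq_card τ).trans_le ((card_filter_le _ _).trans_eq (by simp))

def finStaircasesEquiv {δ : Fin m → ℤ} (hδ : 0 ≤ δ) (k : ℕ) :
    {g : Fin (m + 1) → Fin k // ∀ i, (g i.castSucc : ℤ) + δ i ≤ g i.succ} ≃ staircases δ k where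
  toFun g := ⟨fun i => g.1 i, by simp, by simp, g.2⟩
  invFun f :=
    ⟨fun i => ⟨(f.1 i).toNat, by obtain ⟨h₀, h₁⟩ := mem_Ico_of_mem_staircases hδ f.2 i; omega⟩,
      fun i => by
        have h₀ j := (mem_Ico_of_mem_staircases hδ f.2 j).1
        simpa [Int.toNat_of_nonneg, h₀] using f.2.2.2 i⟩
  left_inv g := by ext; simp
  right_inv f := by ext i; simpa using (mem_Ico_of_mem_staircases hδ f.2 i).1

theorem card_sort_eq_choose (τ : Equiv.Perm (Fin (m + 1))) (k : ℕ) :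
    Fintype.card {w : Fin (m + 1) → Fin k // Tuple.sort w = τ} =
      (k + m - descents τ).choose (m + 1) := by
  set δ : Fin m → ℤ := fun i => if τ i.succ < τ i.castSucc then 1 else 0
  have hδ : 0 ≤ δ := fun i => by simp only [δ]; split_ifs <;> norm_num
  have hsum : ∑ i, δ i = descents τ := by simp [δ, sum_boole, descents_eq_card]
  let e : {w : Fin (m + 1) → Fin k // Tuple.sort w = τ} ≃ staircases δ k :=
    (Equiv.subtypeEquiv (Equiv.arrowCongr τ.symm (Equiv.refl _)) fun w => by
      rw [sort_eq_iff_forall_add_ite_le]; rfl).trans (finStaircasesEquiv hδ k)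
  rw [← Nat.card_eq_fintype_card, Nat.card_congr e, card_staircases, hsum]
  have := descents_le τ
  congr 1
  omega

end Descents

theorem prod_Icc_add_sub_eq_descPochhammer_eval {n j : ℕ} (hj : j ≤ n) (k : ℕ) :
    ∏ i ∈ Icc 1 n, ((k : ℚ) + ((i : ℚ) - j)) = (descPochhammer ℚ n).eval ((k + n - j : ℕ) : ℚ) := by
  rw [descPochhammer_eval_eq_prod_range]
  refine prod_nbij' (fun i => n - i) (fun t => n - t) ?_ ?_ ?_ ?_ ?_
  · intro i hi; simp only [mem_Icc, mem_range] at hi ⊢; omega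
  · intro t ht; simp only [mem_Icc, mem_range] at ht ⊢; omega
  · intro i hi; simp only [mem_Icc] at hi; omega
  · intro t ht; simp only [mem_range] at ht; omega
  · intro i hi
    rw [mem_Icc] at hi
    rw [Nat.cast_sub (by omega : j ≤ k + n), Nat.cast_sub hi.2]
    push_cast
    ring

theorem eq_of_forall_sum_natCast_pow_smul_eq {K V : Type*} [Field K] [CharZero K] [AddCommGroup V]
    [Module K V] {N : ℕ} {v w : ℕ → V}
    (h : ∀ k : ℕ, ∑ l ∈ range N, (k : K) ^ l • v l = ∑ l ∈ range N, (k : K) ^ l • w l)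
    {l : ℕ} (hl : l < N) : v l = w l := by
  rw [← sub_eq_zero, ← Module.forall_dual_apply_eq_zero_iff K]
  intro φ
  set p : K[X] := ∑ i ∈ range N, C (φ (v i - w i)) * X ^ i
  have hp : p = 0 := by
    refine eq_zero_of_infinite_isRoot p
      (Set.infinite_of_injective_forall_mem Nat.cast_injective fun k : ℕ => ?_)
    have hk := congrArg φ (sub_eq_zero.2 (h k))
    simp only [← sum_sub_distrib, ← smul_sub, map_sum, map_smul, smul_eq_mul, map_zero] at hk
    simpa [p, eval_finsetSum, mul_comm] using hk
  have := congrArg (coeff · l) hp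
  simpa only [p, finsetSum_coeff, coeff_C_mul_X_pow, sum_ite_eq, mem_range, hl, if_true,
    coeff_zero] using this

theorem sum_aCoeff_mul_pow {n j : ℕ} (hj : j ≤ n) (k : ℕ) :
    ∑ l ∈ range (n + 1), aCoeff n l j * (k : ℚ) ^ l = ((k + n - j).choose n : ℚ) := by
  have hdeg : (((n.factorial : ℚ))⁻¹ • ∏ i ∈ Icc 1 n, (X + C ((i : ℚ) - j))).natDegree < n + 1 := by
    refine (natDegree_smul_le _ _).trans_lt (Nat.lt_succ_of_le ?_)
    rw [natDegree_prod_of_monic _ _ fun i _ => monic_X_add_C _]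
    simp only [natDegree_X_add_C, sum_const, Nat.card_Icc, smul_eq_mul, mul_one]
    omega
  rw [Nat.cast_choose_eq_descPochhammer_div, ← prod_Icc_add_sub_eq_descPochhammer_eval hj]
  unfold aCoeff
  rw [← eval_eq_sum_range' hdeg]
  simp [eval_prod, div_eq_inv_mul]

def eulSum (n : ℕ) (x : ℚ) : MonoidAlgebra ℚ (Equiv.Perm (Fin n)) :=
  ∑ l ∈ range (n + 1), x ^ l • eul n l

theorem sortSum_fin_eq_eulSum (m k : ℕ) : sortSum ℚ (m + 1) (Fin k) = eulSum (m + 1) k := by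
  simp only [sortSum_eq_sum_card_fiber, card_sort_eq_choose, eulSum, eul, smul_sum,
    MonoidAlgebra.smul_single, smul_eq_mul]
  rw [sum_comm]
  refine sum_congr rfl fun τ _ => ?_
  refine (congrArg (MonoidAlgebra.single τ) ?_).trans (map_sum (MonoidAlgebra.singleAddHom τ) _ _)
  have := descents_le τ
  simp_rw [mul_comm ((k : ℚ) ^ _)]
  rw [sum_aCoeff_mul_pow (by omega), nsmul_one]
  congr 2
  omega

section Eulerian

variable {m : ℕ}

theorem eulSum_mul_eulSum (a b : ℕ) :
    eulSum (m + 1) a * eulSum (m + 1) b = eulSum (m + 1) (b * a) := by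
  rw [← sortSum_fin_eq_eulSum, ← sortSum_fin_eq_eulSum, sortSum_mul,
    sortSum_congr _ _ (Fintype.orderIsoFinOfCardEq _ (k := b * a) (by simp)).symm,
    sortSum_fin_eq_eulSum, Nat.cast_mul]

theorem eulSum_mul_eul (a : ℕ) {l : ℕ} (hl : l ≤ m + 1) :
    eulSum (m + 1) a * eul (m + 1) l = (a : ℚ) ^ l • eul (m + 1) l := by
  refine eq_of_forall_sum_natCast_pow_smul_eq (K := ℚ)
    (v := fun l => eulSum (m + 1) a * eul (m + 1) l) (w := fun l => (a : ℚ) ^ l • eul (m + 1) l)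
    (fun b => ?_) (Nat.lt_succ_of_le hl)
  calc ∑ l ∈ range (m + 1 + 1), (b : ℚ) ^ l • (eulSum (m + 1) a * eul (m + 1) l)
      = eulSum (m + 1) a * eulSum (m + 1) b := by simp only [eulSum, mul_sum, mul_smul_comm]
    _ = eulSum (m + 1) (b * a) := eulSum_mul_eulSum a b
    _ = _ := by simp only [eulSum, mul_pow, mul_smul]

theorem eul_mul_eul {l l' : ℕ} (hl : l ≤ m + 1) (hl' : l' ≤ m + 1) :
    eul (m + 1) l * eul (m + 1) l' = if l = l' then eul (m + 1) l else 0 := by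
  refine eq_of_forall_sum_natCast_pow_smul_eq (K := ℚ)
    (v := fun l => eul (m + 1) l * eul (m + 1) l')
    (w := fun l => if l = l' then eul (m + 1) l else 0) (fun a => ?_) (Nat.lt_succ_of_le hl)
  simp only [smul_ite, smul_zero, sum_ite_eq', mem_range, Nat.lt_succ_of_le hl', if_true]
  rw [← eulSum_mul_eul a hl', eulSum, sum_mul]
  simp only [smul_mul_assoc]

theorem eul_zero : eul (m + 1) 0 = 0 := by
  have h := sortSum_fin_eq_eulSum m 0
  rw [sortSum_of_isEmpty _ _ m.succ_ne_zero, eulSum, sum_range_succ'] at h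
  simpa using h.symm

theorem sum_eul : ∑ l ∈ Icc 1 (m + 1), eul (m + 1) l = 1 := by
  have h := sortSum_fin_eq_eulSum m 1
  rw [sortSum_of_unique, eulSum, range_eq_Ico, sum_eq_sum_Ico_succ_bot (by omega), eul_zero,
    Ico_add_one_right_eq_Icc] at h
  simpa using h.symm

end Eulerian

/-- The Eulerian elements `ẽ⁽¹⁾ₙ, …, ẽ⁽ⁿ⁾ₙ` are mutually orthogonal idempotents
in `ℚ[Sₙ]` summing to the identity. -/
theorem eulerian_idempotents_orthogonal_sum_one (n : ℕ) (hn : 1 ≤ n) :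
    (∀ l l' : ℕ, 1 ≤ l → l ≤ n → 1 ≤ l' → l' ≤ n →
      eul n l * eul n l' = if l = l' then eul n l else 0) ∧
    ∑ l ∈ Finset.Icc 1 n, eul n l = 1 := by
  obtain ⟨m, rfl⟩ := Nat.exists_eq_add_of_le' hn
  exact ⟨fun l l' _ hl _ hl' => eul_mul_eul hl hl', sum_eul⟩
end
end

section
/- For all integers k ≥ 2 and l ≥ 1, one has ẽ⁽ˡ⁾ₖ * τₖ = ẽ⁽ˡ⁻¹⁾ₖ₋₁ * τₖ in ℚ[Sₖ]; explicitly, Σ_{σ∈Sₖ} aₖ^{l, des(σ)+1}·στₖσ⁻¹ = Σ_{α∈Sₖ₋₁} aₖ₋₁^{l−1, des(α)+1}·ατₖα⁻¹, where Sₖ₋₁ ⊆ Sₖ is the subgroup of permutations fixing k. -/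
noncomputable section

/-- The `k`-cycle `τₖ` sending `1 ↦ k` and `i ↦ i-1` for `2 ≤ i ≤ k`
(on `Fin k`: `0 ↦ k-1`, `i ↦ i-1`). -/
def tau (k : ℕ) : Equiv.Perm (Fin k) := (finRotate k)⁻¹

/-- The embedding `Sₖ₋₁ ⊆ Sₖ` as the subgroup of permutations fixing the last element. -/
def embPerm (k : ℕ) (α : Equiv.Perm (Fin (k - 1))) : Equiv.Perm (Fin k) :=
  α.viaEmbedding (Fin.castLEEmb (Nat.sub_le k 1))

/-! Every `σ ∈ S_{n+2}` factors uniquely as `σ = α τ^m` with `α ∈ S_{n+1}` and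
`m ∈ ℤ/(n+2)`, and then `σ τ σ⁻¹ = α τ α⁻¹`. The descents of `α τ^m` are the cyclic descents
of `α` rotated by `m`, except the one that lands on the last position. As `α` has `d + 1`
cyclic descents (`d = des α`, plus the wrap-around one), summing over `m` gives
`(d + 1) a_{n+2}^{l+1, d+1} + (n + 1 - d) a_{n+2}^{l+1, d+2}`, which equals `a_{n+1}^{l, d+1}`
because `∏ (X - j + i)` for `j = d + 1` and `j = d + 2` share all but one factor. -/

open Finset Polynomial
open Fin.NatCast Fin.CommRing

def shiftedRising (n : ℕ) (t : ℚ) : ℚ[X] := ∏ i ∈ range n, (X + C (i + t))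

lemma shiftedRising_succ (n : ℕ) (t : ℚ) :
    shiftedRising (n + 1) t = shiftedRising n t * (X + C (n + t)) :=
  prod_range_succ _ _

lemma shiftedRising_succ' (n : ℕ) (t : ℚ) :
    shiftedRising (n + 1) t = (X + C t) * shiftedRising n (t + 1) := by
  rw [shiftedRising, prod_range_succ', mul_comm, shiftedRising]
  congr 1
  · simp
  · exact prod_congr rfl fun i _ => by push_cast; ring_nf

lemma aCoeff_eq_coeff_shiftedRising (n l j : ℕ) :
    aCoeff n l j = (n.factorial : ℚ)⁻¹ * (shiftedRising n (1 - j)).coeff l := by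
  rw [aCoeff, coeff_smul, smul_eq_mul, shiftedRising, ← Ico_add_one_right_eq_Icc,
    prod_Ico_eq_prod_range]
  congr 2
  exact prod_congr (by simp) fun i _ => by push_cast; ring_nf

lemma aCoeff_recurrence (n d l : ℕ) :
    (d + 1 : ℚ) * aCoeff (n + 1) (l + 1) (d + 1) + (n - d : ℚ) * aCoeff (n + 1) (l + 1) (d + 2)
      = aCoeff n l (d + 1) := by
  simp only [aCoeff_eq_coeff_shiftedRising]
  set R := shiftedRising n (-d)
  have h₀ : shiftedRising n (1 - (d + 1 : ℕ)) = R := by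
    rw [show (1 - ((d + 1 : ℕ) : ℚ)) = -d by push_cast; ring]
  have h₁ : shiftedRising (n + 1) (1 - (d + 1 : ℕ)) = R * (X + C (n - d : ℚ)) := by
    rw [shiftedRising_succ, h₀]
    congr 3
    push_cast
    ring
  have h₂ : shiftedRising (n + 1) (1 - (d + 2 : ℕ)) = (X - C (d + 1 : ℚ)) * R := by
    rw [shiftedRising_succ', show (1 - ((d + 2 : ℕ) : ℚ)) = -(d + 1) by push_cast; ring,
      show -(d + 1 : ℚ) + 1 = -d by ring, map_neg, ← sub_eq_add_neg]
  have hpoly : C (d + 1 : ℚ) * (R * (X + C (n - d : ℚ))) +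
      C (n - d : ℚ) * ((X - C (d + 1 : ℚ)) * R) = C (n + 1 : ℚ) * (X * R) := by
    simp only [map_sub, map_add, map_one, map_natCast]; ring
  have hcoeff := congrArg (coeff · (l + 1)) hpoly
  simp only [coeff_add, coeff_C_mul, coeff_X_mul] at hcoeff
  rw [h₀, h₁, h₂, Nat.factorial_succ]
  push_cast
  field_simp
  linear_combination hcoeff

lemma tau_apply {n : ℕ} (x : Fin (n + 1)) : tau (n + 1) x = x - 1 := by
  rw [tau, Equiv.Perm.inv_def, Equiv.symm_apply_eq, finRotate_apply, sub_add_cancel]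

lemma tau_pow_apply {n : ℕ} (m : ℕ) (x : Fin (n + 1)) : (tau (n + 1) ^ m) x = x - m := by
  induction m generalizing x with
  | zero => simp
  | succ m ih =>
    rw [pow_succ, Equiv.Perm.mul_apply, tau_apply, ih]
    push_cast
    ring

section Descents

variable {n : ℕ}

lemma descents_eq_card_filter (σ : Equiv.Perm (Fin (n + 1))) :
    descents σ = #{i : Fin n | σ i.succ < σ i.castSucc} := by
  symm
  refine card_bij (fun i _ => (i.castSucc, i.succ)) (fun i hi => ?_) ?_ ?_
  · simp_all
  · intro i _ j _ h
    exact Fin.castSucc_injective _ (Prod.ext_iff.mp h).1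
  · rintro ⟨p, q⟩ hpq
    obtain ⟨hqp, hlt⟩ := (mem_filter.mp hpq).2
    simp only at hqp hlt
    refine ⟨⟨p, by omega⟩, ?_, by simp [Fin.ext_iff, hqp]⟩
    refine mem_filter.mpr ⟨mem_univ _, ?_⟩
    convert hlt <;> ext <;> simp [hqp]

/-- `j + 1` wraps around, so `Fin.last n` is a cyclic descent iff `σ 0 < σ (Fin.last n)`. -/
def cyclicDescents (σ : Equiv.Perm (Fin (n + 1))) : Finset (Fin (n + 1)) :=
  {j | σ (j + 1) < σ j}

lemma mem_cyclicDescents {σ : Equiv.Perm (Fin (n + 1))} {j : Fin (n + 1)} :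
    j ∈ cyclicDescents σ ↔ σ (j + 1) < σ j := by
  simp [cyclicDescents]

lemma descents_eq_card_cyclicDescents_erase_last (σ : Equiv.Perm (Fin (n + 1))) :
    descents σ = #((cyclicDescents σ).erase (Fin.last n)) := by
  rw [descents_eq_card_filter, ← filter_ne', cyclicDescents, filter_filter, card_filter,
    card_filter, Fin.sum_univ_castSucc]
  simp [Fin.coeSucc_eq_succ, Fin.castSucc_ne_last]

lemma cyclicDescents_mul_tau_pow (σ : Equiv.Perm (Fin (n + 1))) (m : ℕ) :
    cyclicDescents (σ * tau (n + 1) ^ m) =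
      (cyclicDescents σ).map (Equiv.addRight (m : Fin (n + 1))).toEmbedding := by
  ext j
  simp only [mem_map_equiv, mem_cyclicDescents, Equiv.Perm.mul_apply, tau_pow_apply,
    Equiv.addRight_symm_apply]
  rw [← sub_eq_add_neg, sub_add_eq_add_sub]

lemma descents_mul_tau_pow (σ : Equiv.Perm (Fin (n + 1))) (m : ℕ) :
    descents (σ * tau (n + 1) ^ m) = #((cyclicDescents σ).erase (Fin.last n - m)) := by
  rw [descents_eq_card_cyclicDescents_erase_last, cyclicDescents_mul_tau_pow,
    ← card_map (Equiv.addRight (m : Fin (n + 1))).toEmbedding (s := (cyclicDescents σ).erase _),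
    map_erase]
  simp

end Descents

section Embedding

variable {n : ℕ} (α : Equiv.Perm (Fin (n + 1)))

lemma embPerm_apply_castSucc (i : Fin (n + 1)) : embPerm (n + 2) α i.castSucc = (α i).castSucc :=
  Equiv.Perm.viaEmbedding_apply α _ i

lemma embPerm_apply_last : embPerm (n + 2) α (Fin.last (n + 1)) = Fin.last (n + 1) :=
  Equiv.Perm.viaEmbedding_apply_of_notMem _ _ _ (by simp)

lemma embPerm_injective : Function.Injective (embPerm (n + 2)) :=
  Equiv.Perm.viaEmbeddingHom_injective _

lemma descents_embPerm : descents (embPerm (n + 2) α) = descents α := by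
  rw [descents_eq_card_filter, descents_eq_card_filter, card_filter, card_filter,
    Fin.sum_univ_castSucc]
  simp [Fin.succ_castSucc, -Fin.castSucc_succ, embPerm_apply_castSucc, embPerm_apply_last,
    Fin.le_last]

lemma card_cyclicDescents_embPerm : #(cyclicDescents (embPerm (n + 2) α)) = descents α + 1 := by
  have hlast : Fin.last (n + 1) ∈ cyclicDescents (embPerm (n + 2) α) := by
    rw [mem_cyclicDescents, Fin.last_add_one, embPerm_apply_last, ← Fin.castSucc_zero,
      embPerm_apply_castSucc]
    exact Fin.castSucc_lt_last _
  rw [← descents_embPerm, descents_eq_card_cyclicDescents_erase_last, card_erase_add_one hlast]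

end Embedding

lemma embPerm_mul_tau_pow_bijective (n : ℕ) :
    Function.Bijective fun p : Equiv.Perm (Fin (n + 1)) × Fin (n + 2) =>
      embPerm (n + 2) p.1 * tau (n + 2) ^ (p.2 : ℕ) := by
  rw [Fintype.bijective_iff_injective_and_card]
  refine ⟨fun ⟨α, m⟩ ⟨β, r⟩ h => ?_, ?_⟩
  · -- both sides send `last + m` to `last`, which pins down `m = r`
    have hlast := DFunLike.congr_fun h (Fin.last (n + 1) + m)
    simp only [Equiv.Perm.mul_apply, tau_pow_apply, Fin.cast_val_eq_self, add_sub_cancel_right,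
      embPerm_apply_last] at hlast
    have hmr : Fin.last (n + 1) + m - r = Fin.last (n + 1) :=
      (embPerm (n + 2) β).injective (by rw [embPerm_apply_last]; exact hlast.symm)
    obtain rfl : m = r := add_left_cancel (sub_eq_iff_eq_add.mp hmr)
    rw [embPerm_injective (mul_right_cancel h : embPerm (n + 2) α = embPerm (n + 2) β)]
  · simp [Fintype.card_perm, Nat.factorial_succ (n + 1)]
    ring

lemma sum_card_erase {ι M : Type*} [Fintype ι] [DecidableEq ι] [AddCommMonoid M]
    (s : Finset ι) (f : ℕ → M) :
    ∑ c, f #(s.erase c) = #s • f (#s - 1) + (Fintype.card ι - #s) • f #s := by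
  rw [← sum_add_sum_compl s, sum_congr rfl fun c hc => congrArg f (card_erase_of_mem hc),
    sum_congr rfl fun c hc => congrArg f (congrArg card (erase_eq_of_notMem (mem_compl.mp hc))),
    sum_const, sum_const, card_compl]

lemma sum_aCoeff_descents_embPerm_mul_tau_pow (n l : ℕ) (α : Equiv.Perm (Fin (n + 1))) :
    ∑ m : Fin (n + 2),
        aCoeff (n + 2) (l + 1) (descents (embPerm (n + 2) α * tau (n + 2) ^ (m : ℕ)) + 1)
      = aCoeff (n + 1) l (descents α + 1) := by
  simp_rw [descents_mul_tau_pow, Fin.cast_val_eq_self]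
  set D := cyclicDescents (embPerm (n + 2) α)
  rw [Fintype.sum_equiv (Equiv.subLeft (Fin.last (n + 1)))
      (fun m => aCoeff (n + 2) (l + 1) (#(D.erase (Fin.last (n + 1) - m)) + 1))
      (fun c => aCoeff (n + 2) (l + 1) (#(D.erase c) + 1)) fun _ => rfl,
    sum_card_erase (f := fun d => aCoeff (n + 2) (l + 1) (d + 1)), card_cyclicDescents_embPerm,
    Fintype.card_fin, ← aCoeff_recurrence (n + 1) (descents α) l]
  have hd : descents α ≤ n + 1 := by
    have := card_le_univ D
    rw [card_cyclicDescents_embPerm, Fintype.card_fin] at this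
    omega
  simp [nsmul_eq_mul, Nat.cast_sub hd]

/-- `ẽ⁽ˡ⁾ₖ * τₖ = ẽ⁽ˡ⁻¹⁾ₖ₋₁ * τₖ` in `ℚ[Sₖ]`, where `*` is the (bilinearly extended)
conjugation action. -/
theorem eulerian_conj_tau_restrict (k l : ℕ) (hk : 2 ≤ k) (hl : 1 ≤ l) :
    ∑ σ : Equiv.Perm (Fin k),
        MonoidAlgebra.single (σ * tau k * σ⁻¹) (aCoeff k l (descents σ + 1)) =
    ∑ α : Equiv.Perm (Fin (k - 1)),
        MonoidAlgebra.single (embPerm k α * tau k * (embPerm k α)⁻¹)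
          (aCoeff (k - 1) (l - 1) (descents α + 1)) := by
  obtain ⟨n, rfl⟩ : ∃ n, k = n + 2 := ⟨k - 2, by omega⟩
  obtain ⟨l, rfl⟩ : ∃ l', l = l' + 1 := ⟨l - 1, by omega⟩
  rw [← Fintype.sum_bijective _ (embPerm_mul_tau_pow_bijective n) _ _ fun _ => rfl,
    Fintype.sum_prod_type]
  refine sum_congr rfl fun α _ => ?_
  have hconj (m : ℕ) : embPerm (n + 2) α * tau (n + 2) ^ m * tau (n + 2) *
      (embPerm (n + 2) α * tau (n + 2) ^ m)⁻¹ =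
        embPerm (n + 2) α * tau (n + 2) * (embPerm (n + 2) α)⁻¹ := by
    group
  simp_rw [hconj, ← MonoidAlgebra.singleAddHom_apply, ← map_sum,
    sum_aCoeff_descents_embPerm_mul_tau_pow]
  rfl -- `n + 2 - 1` and `l + 1 - 1` reduce to `n + 1` and `l`
end
end

section
/- Let G be a finite group, let V and W be finite-dimensional complex vector spaces carrying irreducible representations ρ : G → GL(V) and π : G → GL(W) (i.e. V and W are simple as modules over ℂ[G]), and let χ : G → ℂ* be a one-dimensional character such that the twisted representation g ↦ χ(g)·ρ(g) on V is isomorphic to the dual representation of π. Then for every β ∈ ℂ[G], the operator Σ_{g∈G} χ(g)·(ρ(g)∘ρ̃(β)) ⊗ π(g) on V ⊗ W is zero if and only if ρ̃(β) = 0 in End(V), where ρ̃ : ℂ[G] → End(V) is the algebra map extending ρ. -/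
/-!
Contract `V ⊗ W` to the scalars through the pairing `⟨v, w⟩ := T v w`. The twisting condition on
`T` makes the pairing invariant in the sense `χ g ⟨ρ g v, π g w⟩ = ⟨v, w⟩`, so every summand of
`∑ g, χ g • (ρ g ∘ A) ⊗ π g` contracts `v ⊗ w` to the same number `⟨A v, w⟩`. If the sum
vanishes, then `|G| ⟨A v, w⟩ = 0` for all `v, w`, and since `T` is injective, `A = 0`.
-/

open TensorProduct

section TwistedSum

variable {k G V W : Type*} [Field k] [Group G]
  [AddCommGroup V] [Module k V] [AddCommGroup W] [Module k W]
  {χ : G →* kˣ} {ρ : Representation k G V} {π : Representation k G W}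
  {f : V →ₗ[k] Module.Dual k W}

theorem smul_pairing_apply_eq_of_twist
    (hf : ∀ (g : G) (v : V), f ((χ g : k) • ρ g v) = (π g⁻¹).dualMap (f v))
    (g : G) (v : V) (w : W) : (χ g : k) * f (ρ g v) (π g w) = f v w := by
  have := LinearMap.congr_fun (hf g v) (π g w)
  rwa [map_smul, LinearMap.smul_apply, smul_eq_mul, LinearMap.dualMap_apply,
    Representation.inv_self_apply] at this

variable [Fintype G]

variable (χ ρ π) in
noncomputable def twistedSum (A : V →ₗ[k] V) : V ⊗[k] W →ₗ[k] V ⊗[k] W :=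
  ∑ g : G, (χ g : k) • TensorProduct.map (ρ g ∘ₗ A) (π g)

variable (χ ρ π) in
@[simp]
theorem twistedSum_zero : twistedSum χ ρ π 0 = 0 := by
  simp [twistedSum]

theorem lift_twistedSum_tmul
    (hf : ∀ (g : G) (v : V), f ((χ g : k) • ρ g v) = (π g⁻¹).dualMap (f v))
    (A : V →ₗ[k] V) (v : V) (w : W) :
    TensorProduct.lift f (twistedSum χ ρ π A (v ⊗ₜ w)) = Fintype.card G • f (A v) w := by
  simp only [twistedSum, LinearMap.sum_apply, map_sum, LinearMap.smul_apply,
    map_smul, map_tmul, LinearMap.comp_apply, lift.tmul, smul_eq_mul,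
    smul_pairing_apply_eq_of_twist hf, Finset.sum_const, Finset.card_univ]

theorem eq_zero_of_twistedSum_eq_zero [CharZero k]
    (hf : ∀ (g : G) (v : V), f ((χ g : k) • ρ g v) = (π g⁻¹).dualMap (f v))
    (hf_inj : Function.Injective f) {A : V →ₗ[k] V} (hA : twistedSum χ ρ π A = 0) : A = 0 := by
  ext v
  have hpair : f (A v) = 0 := by
    ext w
    have := lift_twistedSum_tmul hf A v w
    rw [hA, LinearMap.zero_apply, map_zero, nsmul_eq_mul, eq_comm] at this
    exact (mul_eq_zero.mp this).resolve_left (Nat.cast_ne_zero.mpr Fintype.card_ne_zero)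
  exact (map_eq_zero_iff f hf_inj).mp hpair

end TwistedSum

theorem twisted_sum_tensor_eq_zero_iff_general (G : Type*) [Group G] [Fintype G]
    (V W : Type*) [AddCommGroup V] [Module ℂ V] [AddCommGroup W] [Module ℂ W]
    (ρ : Representation ℂ G V) (π : Representation ℂ G W)
    (χ : G →* ℂˣ)
    (T : V ≃ₗ[ℂ] Module.Dual ℂ W)
    (hT : ∀ (g : G) (v : V), T ((χ g : ℂ) • ρ g v) = (π g⁻¹).dualMap (T v))
    (β : MonoidAlgebra ℂ G) :
    (∑ g : G, (χ g : ℂ) •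
        TensorProduct.map ((ρ g) ∘ₗ (β.coeff.sum fun h c => c • ρ h)) (π g)) = 0 ↔
      (β.coeff.sum fun h c => c • ρ h) = 0 := by
  refine ⟨eq_zero_of_twistedSum_eq_zero (f := T.toLinearMap) hT T.injective, fun hβ => ?_⟩
  rw [hβ]
  exact twistedSum_zero χ ρ π

/-- Let `G` be a finite group, `ρ`, `π` irreducible finite-dimensional complex
representations of `G` on `V`, `W`, and `χ : G → ℂ*` a one-dimensional character such
that the twist of `ρ` by `χ` is isomorphic to the dual representation of `π`. Then for
`β ∈ ℂ[G]`, the operator `Σ_{g∈G} χ(g)·(ρ(g)∘ρ̃(β)) ⊗ π(g)` on `V ⊗ W` vanishes iff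
`ρ̃(β) = 0` in `End(V)`. -/
theorem twisted_sum_tensor_eq_zero_iff (G : Type*) [Group G] [Fintype G]
    (V W : Type*) [AddCommGroup V] [Module ℂ V] [AddCommGroup W] [Module ℂ W]
    [FiniteDimensional ℂ V] [FiniteDimensional ℂ W]
    (ρ : Representation ℂ G V) (π : Representation ℂ G W)
    (hρ : ∀ U : Submodule ℂ V, (∀ g : G, U.map (ρ g) ≤ U) → U = ⊥ ∨ U = ⊤)
    (hπ : ∀ U : Submodule ℂ W, (∀ g : G, U.map (π g) ≤ U) → U = ⊥ ∨ U = ⊤)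
    (χ : G →* ℂˣ)
    (T : V ≃ₗ[ℂ] Module.Dual ℂ W)
    (hT : ∀ (g : G) (v : V), T ((χ g : ℂ) • ρ g v) = (π g⁻¹).dualMap (T v))
    (β : MonoidAlgebra ℂ G) :
    (∑ g : G, (χ g : ℂ) •
        TensorProduct.map ((ρ g) ∘ₗ (β.coeff.sum fun h c => c • ρ h)) (π g)) = 0 ↔
      (β.coeff.sum fun h c => c • ρ h) = 0 :=
  twisted_sum_tensor_eq_zero_iff_general G V W ρ π χ T hT β
end

section
/- Let K be a field, V a finite-dimensional K-vector space, with internal direct sum decompositions V = V₁ ⊕ V₂ and V = W₁ ⊕ ⋯ ⊕ W_m. Let p₁ : V → V be the projection onto V₁ along V₂, and for each i let πᵢ : V → V be the projection onto Wᵢ along ⊕_{j≠i} Wⱼ. If dim p₁(W₁) + ⋯ + dim p₁(W_m) = dim V₁, then for every i one has πᵢ(V₂) = Wᵢ ∩ V₂. In particular, if πᵢ(V₂) ≠ Wᵢ ∩ V₂ for some i, then dim p₁(W₁) + ⋯ + dim p₁(W_m) > dim V₁. -/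
open Module Submodule

lemma aux_finrank_sup_le {K V : Type*} [Field K] [AddCommGroup V] [Module K V]
    [FiniteDimensional K V] {ι : Type*} (s : Finset ι) (M : ι → Submodule K V) :
    finrank K ↥(s.sup M) ≤ ∑ i ∈ s, finrank K (M i) := by
  classical
  induction s using Finset.cons_induction with
  | empty => simp
  | cons a s ha ih =>
      rw [Finset.sup_cons, Finset.sum_cons]
      have h := Submodule.finrank_sup_add_finrank_inf_eq (M a) (s.sup M)
      omega

lemma aux_sum_le_finrank_sup {K V : Type*} [Field K] [AddCommGroup V] [Module K V]
    [FiniteDimensional K V] {ι : Type*} (s : Finset ι) (M : ι → Submodule K V)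
    (hM : iSupIndep M) :
    ∑ i ∈ s, finrank K (M i) ≤ finrank K ↥(s.sup M) := by
  classical
  induction s using Finset.cons_induction with
  | empty => simp
  | cons a s ha ih =>
      rw [Finset.sup_cons, Finset.sum_cons]
      have hdisj : M a ⊓ s.sup M = ⊥ := by
        refine disjoint_iff.mp (Disjoint.mono_right ?_ (hM a))
        refine Finset.sup_le fun j hj => le_iSup₂ (f := fun j _ => M j) j ?_
        exact fun h => ha (h ▸ hj)
      have h := Submodule.finrank_sup_add_finrank_inf_eq (M a) (s.sup M)
      rw [hdisj] at h
      simp only [finrank_bot] at h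
      omega

/-- Let `V = V₁ ⊕ V₂` and `V = W₁ ⊕ ⋯ ⊕ W_m` be internal direct sum decompositions of a
finite-dimensional vector space, `p₁` the projection onto `V₁` along `V₂`, and `πᵢ` the
projection onto `Wᵢ` along `⊕_{j≠i} Wⱼ`. If `Σᵢ dim p₁(Wᵢ) = dim V₁` then
`πᵢ(V₂) = Wᵢ ∩ V₂` for every `i`; in particular if `πᵢ(V₂) ≠ Wᵢ ∩ V₂` for some `i` then
`Σᵢ dim p₁(Wᵢ) > dim V₁`. -/
theorem proj_of_sum_finrank_eq (K V : Type*) [Field K] [AddCommGroup V] [Module K V]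
    [FiniteDimensional K V]
    (V₁ V₂ : Submodule K V) (hV : IsCompl V₁ V₂)
    (m : ℕ) (W : Fin m → Submodule K V) (hW : DirectSum.IsInternal W)
    (p₁ : V →ₗ[K] V) (hp₁ : ∀ x ∈ V₁, p₁ x = x) (hp₂ : ∀ x ∈ V₂, p₁ x = 0)
    (π : Fin m → (V →ₗ[K] V))
    (hπ : ∀ i, (∀ x ∈ W i, π i x = x) ∧ ∀ j, j ≠ i → ∀ x ∈ W j, π i x = 0) :
    ((∑ i : Fin m, Module.finrank K ((W i).map p₁) = Module.finrank K V₁) →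
      ∀ i, V₂.map (π i) = W i ⊓ V₂) ∧
    ((∃ i, V₂.map (π i) ≠ W i ⊓ V₂) →
      Module.finrank K V₁ < ∑ i : Fin m, Module.finrank K ((W i).map p₁)) := by
  classical
  -- decompositions
  have hsup : V₁ ⊔ V₂ = ⊤ := hV.codisjoint.eq_top
  have hker : LinearMap.ker p₁ = V₂ := by
    apply le_antisymm
    · intro x hx
      simp only [LinearMap.mem_ker] at hx
      obtain ⟨a, ha, b, hb, rfl⟩ := Submodule.mem_sup.mp (hsup ▸ Submodule.mem_top (x := x))
      rw [map_add, hp₁ a ha, hp₂ b hb, add_zero] at hx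
      subst hx
      simpa using hb
    · intro x hx; simpa [LinearMap.mem_ker] using hp₂ x hx
  have hWsup : ⨆ i, W i = ⊤ := hW.submodule_iSup_eq_top
  have hWind : iSupIndep W := hW.submodule_iSupIndep
  -- rank-nullity on each W i
  have hrn : ∀ i, finrank K (W i) =
      finrank K ((W i).map p₁) + finrank K ↥(W i ⊓ V₂) := by
    intro i
    have h := LinearMap.finrank_range_add_finrank_ker (p₁ ∘ₗ (W i).subtype)
    have hr : LinearMap.range (p₁ ∘ₗ (W i).subtype) = (W i).map p₁ := by
      rw [LinearMap.range_comp, Submodule.range_subtype]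
    have hk : LinearMap.ker (p₁ ∘ₗ (W i).subtype) = V₂.comap (W i).subtype := by
      rw [LinearMap.ker_comp, hker]
    rw [hr, hk] at h
    have he : finrank K ↥(V₂.comap (W i).subtype) = finrank K ↥(W i ⊓ V₂) := by
      have h2 := (Submodule.equivSubtypeMap (W i) (V₂.comap (W i).subtype)).finrank_eq
      rwa [Submodule.map_comap_subtype] at h2
    omega
  -- Σ finrank (W i) = finrank V
  have hsumW : ∑ i : Fin m, finrank K (W i) = finrank K V := by
    have := Module.finrank_directSum K (fun i => W i)
    rw [← this]
    exact LinearEquiv.finrank_eq (LinearEquiv.ofBijective (DirectSum.coeLinearMap W) hW)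
  have hV12 : finrank K V₁ + finrank K V₂ = finrank K V :=
    Submodule.finrank_add_eq_of_isCompl hV
  -- general inequality: finrank V₁ ≤ Σ finrank map p₁ (W i)
  have hrange : Submodule.map p₁ ⊤ = V₁ := by
    apply le_antisymm
    · rintro _ ⟨x, -, rfl⟩
      obtain ⟨a, ha, b, hb, rfl⟩ := Submodule.mem_sup.mp (hsup ▸ Submodule.mem_top (x := x))
      rw [map_add, hp₁ a ha, hp₂ b hb, add_zero]; exact ha
    · intro a ha
      exact ⟨a, Submodule.mem_top, hp₁ a ha⟩
  have hle : finrank K V₁ ≤ ∑ i : Fin m, finrank K ((W i).map p₁) := by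
    have h1 : (⨆ i, (W i).map p₁) = V₁ := by
      rw [← Submodule.map_iSup, hWsup, hrange]
    calc finrank K V₁ = finrank K ↥(Finset.univ.sup fun i => (W i).map p₁) := by
          rw [Finset.sup_univ_eq_iSup, h1]
      _ ≤ _ := aux_finrank_sup_le _ _
  -- main implication
  have main : (∑ i : Fin m, Module.finrank K ((W i).map p₁) = Module.finrank K V₁) →
      ∀ i, V₂.map (π i) = W i ⊓ V₂ := by
    intro hsum i
    -- Σ finrank (W i ⊓ V₂) = finrank V₂
    have hsum2 : ∑ i : Fin m, finrank K ↥(W i ⊓ V₂) = finrank K V₂ := by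
      have : ∑ i : Fin m, finrank K (W i)
          = (∑ i : Fin m, finrank K ((W i).map p₁))
            + ∑ i : Fin m, finrank K ↥(W i ⊓ V₂) := by
        rw [← Finset.sum_add_distrib]
        exact Finset.sum_congr rfl fun i _ => hrn i
      omega
    -- ⨆ (W i ⊓ V₂) = V₂
    have hind2 : iSupIndep (fun i => W i ⊓ V₂) := hWind.mono fun i => inf_le_left
    have hS : (⨆ i, W i ⊓ V₂) = V₂ := by
      apply Submodule.eq_of_le_of_finrank_le (iSup_le fun i => inf_le_right)
      calc finrank K V₂ = ∑ i : Fin m, finrank K ↥(W i ⊓ V₂) := hsum2.symm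
        _ ≤ finrank K ↥(Finset.univ.sup fun i => W i ⊓ V₂) :=
            aux_sum_le_finrank_sup _ _ hind2
        _ = _ := by rw [Finset.sup_univ_eq_iSup]
    apply le_antisymm
    · rw [Submodule.map_le_iff_le_comap, ← hS]
      refine iSup_le fun j y hy => ?_
      obtain ⟨hyW, hyV⟩ := hy
      simp only [Submodule.mem_comap]
      by_cases hij : j = i
      · subst hij
        rw [(hπ j).1 y hyW]
        exact ⟨hyW, Submodule.mem_iSup_of_mem j ⟨hyW, hyV⟩⟩
      · rw [(hπ i).2 j hij y hyW]
        exact Submodule.zero_mem _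
    · intro x hx
      exact ⟨x, hx.2, (hπ i).1 x hx.1⟩
  refine ⟨main, fun ⟨i, hi⟩ => ?_⟩
  refine lt_of_le_of_ne hle fun heq => hi (main heq.symm i)
end

section
/- Let R be a commutative ring and H a commutative bialgebra over R. Define the Adams operations ψ^n : H → H as convolution powers of the identity: ψ⁰ := η ∘ ε (the unit composed with the counit) and ψ^{n+1} := μ ∘ (ψ^n ⊗ id) ∘ Δ. Then for all natural numbers p and q, ψ^p ∘ ψ^q = ψ^{pq}. -/
/-!
Because `H` is commutative, the identity is an algebra map, and `ψⁿ` is its `n`-th power in the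
convolution monoid of algebra maps `H →ₐ[R] H`. Postcomposition with an algebra map is a monoid
homomorphism for convolution, so `ψᵖ ∘ ψ^q = (ψᵖ ∘ id)^q = (idᵖ)^q = id^{pq}`.
-/

noncomputable section

/-- The Adams operations (convolution powers of the identity) on a bialgebra `H`:
`ψ⁰ = η ∘ ε` and `ψ^{n+1} = μ ∘ (ψ^n ⊗ id) ∘ Δ`. -/
def adamsOperation (R H : Type*) [CommRing R] [CommRing H] [Bialgebra R H] :
    ℕ → (H →ₗ[R] H)
  | 0 => Algebra.linearMap R H ∘ₗ Coalgebra.counit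
  | n + 1 =>
      LinearMap.mul' R H ∘ₗ
        TensorProduct.map (adamsOperation R H n) LinearMap.id ∘ₗ Coalgebra.comul

open WithConv

lemma AlgHom.comp_convPow {R A B C : Type*} [CommSemiring R] [CommSemiring A] [CommSemiring B]
    [Semiring C] [Bialgebra R C] [Algebra R A] [Algebra R B]
    (h : A →ₐ[R] B) (f : WithConv (C →ₐ[R] A)) (n : ℕ) :
    toConv (h.comp (f ^ n).ofConv) = toConv (h.comp f.ofConv) ^ n := by
  induction n with
  | zero => simp [convOne_def, ← AlgHom.comp_assoc]
  | succ n ih => rw [pow_succ, pow_succ, AlgHom.comp_convMul_distrib, ih, toConv_ofConv]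

def adamsAlgHom (R H : Type*) [CommSemiring R] [CommSemiring H] [Bialgebra R H] (n : ℕ) :
    H →ₐ[R] H :=
  (toConv (AlgHom.id R H) ^ n).ofConv

lemma adamsAlgHom_comp (R H : Type*) [CommSemiring R] [CommSemiring H] [Bialgebra R H]
    (p q : ℕ) : (adamsAlgHom R H p).comp (adamsAlgHom R H q) = adamsAlgHom R H (p * q) := by
  apply toConv_injective
  unfold adamsAlgHom
  rw [AlgHom.comp_convPow, AlgHom.comp_id, toConv_ofConv, pow_mul]

lemma toLinearMap_adamsAlgHom (R H : Type*) [CommRing R] [CommRing H] [Bialgebra R H] (n : ℕ) :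
    (adamsAlgHom R H n).toLinearMap = adamsOperation R H n := by
  rw [← ofConv_toConv (AlgHom.toLinearMap _), adamsAlgHom, AlgHom.toLinearMap_convPow]
  induction n with
  | zero => rfl
  | succ n ih => rw [pow_succ, LinearMap.convMul_def, ih]; rfl

/-- On a commutative bialgebra, the Adams operations satisfy `ψ^p ∘ ψ^q = ψ^{pq}`. -/
theorem adamsOperation_comp (R H : Type*) [CommRing R] [CommRing H] [Bialgebra R H]
    (p q : ℕ) :
    adamsOperation R H p ∘ₗ adamsOperation R H q = adamsOperation R H (p * q) := by
  simp only [← toLinearMap_adamsAlgHom, ← AlgHom.comp_toLinearMap, adamsAlgHom_comp]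
end
end
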